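/- arXiv:1301.5679 — 2 statements merged into one kernel-verified Lean document; each statement's English description precedes it below -/
import Mathlib

section
/- Let D = I × J be a product of open intervals and f : D → ℝ³ a weakly-regular C^{1M} ps-front with weakly harmonic map N. Fix (x₀,y₀) ∈ D and define s(x) = ∫_{x₀}^x ‖f_x(t,y₀)‖ dt for x ∈ I and t(y) = ∫_{y₀}^y ‖f_y(x₀,u)‖ du for y ∈ J. Then s and t are C¹ with everywhere positive derivative (hence C¹ diffeomorphisms onto open intervals I′ and J′), the map g : I′ × J′ → ℝ³, g(σ,τ) := f(s⁻¹(σ), t⁻¹(τ)), is C^{1M}, and g satisfies ‖g_σ‖ ≡ 1 and ‖g_τ‖ ≡ 1 (i.e., g is a Chebyshev reparametrization of f, with associated map N ∘ (s⁻¹ × t⁻¹)). -/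
noncomputable section

open Real Set

abbrev E3 : Type := EuclideanSpace ℝ (Fin 3)

/-- Partial derivative in the `x`-direction. -/
noncomputable def pdx {E : Type*} [NormedAddCommGroup E] [NormedSpace ℝ E]
    (f : ℝ × ℝ → E) (p : ℝ × ℝ) : E := lineDeriv ℝ f p ((1 : ℝ), (0 : ℝ))

/-- Partial derivative in the `y`-direction. -/
noncomputable def pdy {E : Type*} [NormedAddCommGroup E] [NormedSpace ℝ E]
    (f : ℝ × ℝ → E) (p : ℝ × ℝ) : E := lineDeriv ℝ f p ((0 : ℝ), (1 : ℝ))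

/-- `f` is C¹ on `D`, and the mixed second partials `∂y∂x f` and `∂x∂y f`
exist at every point of `D`, are continuous on `D`, and agree on `D`. -/
def C1M {E : Type*} [NormedAddCommGroup E] [NormedSpace ℝ E]
    (D : Set (ℝ × ℝ)) (f : ℝ × ℝ → E) : Prop :=
  ContDiffOn ℝ 1 f D ∧
  (∀ p ∈ D, LineDifferentiableAt ℝ (pdx f) p ((0 : ℝ), (1 : ℝ))) ∧
  (∀ p ∈ D, LineDifferentiableAt ℝ (pdy f) p ((1 : ℝ), (0 : ℝ))) ∧
  ContinuousOn (pdy (pdx f)) D ∧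
  ContinuousOn (pdx (pdy f)) D ∧
  (∀ p ∈ D, pdy (pdx f) p = pdx (pdy f) p)

/-- The cross product on ℝ³. -/
noncomputable def cross3 (a b : E3) : E3 :=
  (WithLp.equiv 2 (Fin 3 → ℝ)).symm
    ![a 1 * b 2 - a 2 * b 1, a 2 * b 0 - a 0 * b 2, a 0 * b 1 - a 1 * b 0]

/-- The Euclidean inner product on ℝ³. -/
noncomputable def dot (a b : E3) : ℝ := inner ℝ a b

/-- `N : D → S²` is weakly harmonic: it is C^{1M}, weakly regular, takes values in the
unit sphere, and `N_xy = N_yx = h • N` for some scalar function `h`. -/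
def WeakHarmonic (D : Set (ℝ × ℝ)) (N : ℝ × ℝ → E3) : Prop :=
  C1M D N ∧ (∀ p ∈ D, ‖N p‖ = 1) ∧
  (∀ p ∈ D, pdx N p ≠ 0 ∧ pdy N p ≠ 0) ∧
  ∃ h : ℝ × ℝ → ℝ, ∀ p ∈ D, pdy (pdx N) p = h p • N p ∧ pdx (pdy N) p = h p • N p

/-- A weakly-regular C^{1M} ps-front with associated weakly harmonic map `N`. -/
def PsFront (D : Set (ℝ × ℝ)) (f N : ℝ × ℝ → E3) : Prop :=
  C1M D f ∧ (∀ p ∈ D, pdx f p ≠ 0 ∧ pdy f p ≠ 0) ∧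
  WeakHarmonic D N ∧
  ∀ p ∈ D, pdx f p = cross3 (N p) (pdx N p) ∧ pdy f p = -cross3 (N p) (pdy N p)

/-!
For a ps-front, `‖f_x‖ = ‖N × N_x‖ = ‖N_x‖` because `N ⊥ N_x`, and `‖N_x‖` does not depend on `y`:
`∂_y ‖N_x‖² = 2 ⟪N_x, N_xy⟫ = 2h ⟪N_x, N⟫ = 0`. Symmetrically `‖f_y‖` does not depend on `x`.
So `s` measures arclength along every `x`-curve and `t` along every `y`-curve, and
reparametrizing by `s⁻¹ × t⁻¹` makes all coordinate curves unit speed. The chain rule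
multiplies the first partials by `(s⁻¹)'` resp. `(t⁻¹)'` and the mixed partials by
`(s⁻¹)' (t⁻¹)'`, which preserves the C^{1M}, weak-regularity and ps-front conditions.
-/

open Filter Function
open scoped InnerProductSpace Topology

section PartialDerivatives

variable {E : Type*} [NormedAddCommGroup E] [NormedSpace ℝ E] {F : ℝ × ℝ → E} {v : E}
  {p : ℝ × ℝ} {D : Set (ℝ × ℝ)}

lemma hasDerivAt_comp_const_add_zero_iff {g : ℝ → E} {a : ℝ} :
    HasDerivAt (fun t => g (a + t)) v 0 ↔ HasDerivAt g v a := by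
  refine ⟨fun h => ?_, fun h => .comp_const_add a 0 (by rwa [add_zero])⟩
  have h' : HasDerivAt (fun t => g (a + t)) v (a + -a) := by rwa [add_neg_cancel]
  simpa using h'.comp_add_const a (-a)

lemma hasLineDerivAt_horizontal_iff :
    HasLineDerivAt ℝ F v p ((1 : ℝ), (0 : ℝ)) ↔ HasDerivAt (fun x => F (x, p.2)) v p.1 := by
  have hline : ∀ t : ℝ, p + t • ((1 : ℝ), (0 : ℝ)) = (p.1 + t, p.2) := fun t => by
    ext <;> simp
  rw [HasLineDerivAt]
  simp only [hline]
  exact hasDerivAt_comp_const_add_zero_iff (g := fun x => F (x, p.2))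

lemma hasLineDerivAt_vertical_iff :
    HasLineDerivAt ℝ F v p ((0 : ℝ), (1 : ℝ)) ↔ HasDerivAt (fun y => F (p.1, y)) v p.2 := by
  have hline : ∀ t : ℝ, p + t • ((0 : ℝ), (1 : ℝ)) = (p.1, p.2 + t) := fun t => by
    ext <;> simp
  rw [HasLineDerivAt]
  simp only [hline]
  exact hasDerivAt_comp_const_add_zero_iff (g := fun y => F (p.1, y))

lemma pdx_eq_of_hasDerivAt (h : HasDerivAt (fun x => F (x, p.2)) v p.1) : pdx F p = v :=
  (hasLineDerivAt_horizontal_iff.mpr h).lineDeriv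

lemma pdy_eq_of_hasDerivAt (h : HasDerivAt (fun y => F (p.1, y)) v p.2) : pdy F p = v :=
  (hasLineDerivAt_vertical_iff.mpr h).lineDeriv

lemma LineDifferentiableAt.hasDerivAt_pdx (h : LineDifferentiableAt ℝ F p ((1 : ℝ), (0 : ℝ))) :
    HasDerivAt (fun x => F (x, p.2)) (pdx F p) p.1 :=
  hasLineDerivAt_horizontal_iff.mp h.hasLineDerivAt

lemma LineDifferentiableAt.hasDerivAt_pdy (h : LineDifferentiableAt ℝ F p ((0 : ℝ), (1 : ℝ))) :
    HasDerivAt (fun y => F (p.1, y)) (pdy F p) p.2 :=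
  hasLineDerivAt_vertical_iff.mp h.hasLineDerivAt

lemma ContDiffOn.continuousOn_lineDeriv (hF : ContDiffOn ℝ 1 F D)
    (hD : IsOpen D) (w : ℝ × ℝ) : ContinuousOn (fun p => lineDeriv ℝ F p w) D := by
  refine ((hF.continuousOn_fderiv_of_isOpen hD le_rfl).clm_apply
    (continuousOn_const (c := w))).congr fun p hp => ?_
  exact (((hF.differentiableOn one_ne_zero).differentiableAt (hD.mem_nhds hp)).hasFDerivAt
    |>.hasLineDerivAt w).lineDeriv

lemma C1M.differentiableAt (hF : C1M D F) (hD : IsOpen D) (hp : p ∈ D) :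
    DifferentiableAt ℝ F p :=
  (hF.1.differentiableOn one_ne_zero).differentiableAt (hD.mem_nhds hp)

end PartialDerivatives

section CrossProduct

lemma inner_cross3_self (a b : E3) :
    ⟪cross3 a b, cross3 a b⟫_ℝ = ⟪a, a⟫_ℝ * ⟪b, b⟫_ℝ - ⟪a, b⟫_ℝ ^ 2 := by
  simp only [cross3, PiLp.inner_apply, RCLike.inner_apply, conj_trivial, Fin.sum_univ_three,
    WithLp.equiv_symm_apply]
  simp only [Fin.isValue, Matrix.cons_val_zero, Matrix.cons_val_one, Matrix.cons_val_two,
    Matrix.head_cons, Matrix.tail_cons]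
  ring

lemma cross3_smul_right (a : E3) (c : ℝ) (b : E3) : cross3 a (c • b) = c • cross3 a b := by
  ext i
  fin_cases i <;> simp [cross3] <;> ring

lemma norm_cross3_of_inner_eq_zero {a b : E3} (ha : ‖a‖ = 1) (hab : ⟪a, b⟫_ℝ = 0) :
    ‖cross3 a b‖ = ‖b‖ := by
  have hsq : ‖cross3 a b‖ ^ 2 = ‖b‖ ^ 2 := by
    rw [← real_inner_self_eq_norm_sq, ← real_inner_self_eq_norm_sq, inner_cross3_self, hab,
      real_inner_self_eq_norm_sq a, ha]
    ring
  exact (sq_eq_sq₀ (norm_nonneg _) (norm_nonneg _)).mp hsq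

end CrossProduct

section UnitVectorFields

variable {V E : Type*} [NormedAddCommGroup V] [NormedSpace ℝ V]
  [NormedAddCommGroup E] [InnerProductSpace ℝ E]

lemma inner_eq_zero_of_hasLineDerivAt_of_norm_eq_one {N : V → E} {v : E} {p w : V}
    (hN : HasLineDerivAt ℝ N v p w) (hunit : ∀ᶠ q in 𝓝 p, ‖N q‖ = 1) : ⟪N p, v⟫_ℝ = 0 := by
  have hsq : HasDerivAt (fun t : ℝ => ⟪N (p + t • w), N (p + t • w)⟫_ℝ) (2 * ⟪N p, v⟫_ℝ) 0 := by
    have := hN.inner ℝ hN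
    rwa [zero_smul, add_zero, real_inner_comm (N p) v, ← two_mul] at this
  have hline : Tendsto (fun t : ℝ => p + t • w) (𝓝 0) (𝓝 p) := by
    simpa using ((continuous_id.smul continuous_const).const_add p).tendsto (0 : ℝ)
  have hconst : HasDerivAt (fun t : ℝ => ⟪N (p + t • w), N (p + t • w)⟫_ℝ) 0 0 := by
    refine (hasDerivAt_const (0 : ℝ) (1 : ℝ)).congr_of_eventuallyEq ?_
    filter_upwards [hline.eventually hunit] with t ht
    rw [real_inner_self_eq_norm_sq, ht, one_pow]
  linarith [hsq.unique hconst]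

lemma norm_eq_of_inner_hasDerivAt_eq_zero {φ φ' : ℝ → E} {J : Set ℝ} (hJ : J.OrdConnected)
    (hφ : ∀ t ∈ J, HasDerivAt φ (φ' t) t) (horth : ∀ t ∈ J, ⟪φ t, φ' t⟫_ℝ = 0)
    {a b : ℝ} (ha : a ∈ J) (hb : b ∈ J) : ‖φ a‖ = ‖φ b‖ := by
  have hsq : ∀ t ∈ J, HasDerivWithinAt (fun t => ‖φ t‖ ^ 2) 0 J t := fun t ht => by
    have := ((hφ t ht).norm_sq).hasDerivWithinAt (s := J)
    rwa [horth t ht, mul_zero] at this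
  have := hJ.convex.norm_image_sub_le_of_norm_hasDerivWithin_le hsq (fun _ _ => norm_zero.le)
    hb ha
  rw [zero_mul, norm_le_zero_iff, sub_eq_zero] at this
  exact (sq_eq_sq₀ (norm_nonneg _) (norm_nonneg _)).mp this

end UnitVectorFields

section PsFronts

variable {D : Set (ℝ × ℝ)} {I J : Set ℝ} {f N : ℝ × ℝ → E3} {p : ℝ × ℝ}

lemma WeakHarmonic.inner_pdx_eq_zero (hN : WeakHarmonic D N) (hD : IsOpen D) (hp : p ∈ D) :
    ⟪N p, pdx N p⟫_ℝ = 0 :=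
  inner_eq_zero_of_hasLineDerivAt_of_norm_eq_one
    (hN.1.differentiableAt hD hp).lineDifferentiableAt.hasLineDerivAt
    (eventually_of_mem (hD.mem_nhds hp) hN.2.1)

lemma WeakHarmonic.inner_pdy_eq_zero (hN : WeakHarmonic D N) (hD : IsOpen D) (hp : p ∈ D) :
    ⟪N p, pdy N p⟫_ℝ = 0 :=
  inner_eq_zero_of_hasLineDerivAt_of_norm_eq_one
    (hN.1.differentiableAt hD hp).lineDifferentiableAt.hasLineDerivAt
    (eventually_of_mem (hD.mem_nhds hp) hN.2.1)

lemma WeakHarmonic.norm_pdx_eq (hN : WeakHarmonic (I ×ˢ J) N) (hD : IsOpen (I ×ˢ J))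
    (hJ : J.OrdConnected) {x y y' : ℝ} (hx : x ∈ I) (hy : y ∈ J) (hy' : y' ∈ J) :
    ‖pdx N (x, y)‖ = ‖pdx N (x, y')‖ := by
  obtain ⟨_, hh⟩ := hN.2.2.2
  refine norm_eq_of_inner_hasDerivAt_eq_zero (φ := fun t => pdx N (x, t))
    (φ' := fun t => pdy (pdx N) (x, t)) hJ
    (fun t ht => (hN.1.2.1 (x, t) ⟨hx, ht⟩).hasDerivAt_pdy) (fun t ht => ?_) hy hy'
  rw [(hh (x, t) ⟨hx, ht⟩).1, inner_smul_right, real_inner_comm,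
    hN.inner_pdx_eq_zero hD ⟨hx, ht⟩, mul_zero]

lemma WeakHarmonic.norm_pdy_eq (hN : WeakHarmonic (I ×ˢ J) N) (hD : IsOpen (I ×ˢ J))
    (hI : I.OrdConnected) {x x' y : ℝ} (hx : x ∈ I) (hx' : x' ∈ I) (hy : y ∈ J) :
    ‖pdy N (x, y)‖ = ‖pdy N (x', y)‖ := by
  obtain ⟨_, hh⟩ := hN.2.2.2
  refine norm_eq_of_inner_hasDerivAt_eq_zero (φ := fun t => pdy N (t, y))
    (φ' := fun t => pdx (pdy N) (t, y)) hI
    (fun t ht => (hN.1.2.2.1 (t, y) ⟨ht, hy⟩).hasDerivAt_pdx) (fun t ht => ?_) hx hx'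
  rw [(hh (t, y) ⟨ht, hy⟩).2, inner_smul_right, real_inner_comm,
    hN.inner_pdy_eq_zero hD ⟨ht, hy⟩, mul_zero]

lemma PsFront.norm_pdx (hf : PsFront D f N) (hD : IsOpen D) (hp : p ∈ D) :
    ‖pdx f p‖ = ‖pdx N p‖ := by
  rw [(hf.2.2.2 p hp).1]
  exact norm_cross3_of_inner_eq_zero (hf.2.2.1.2.1 p hp) (hf.2.2.1.inner_pdx_eq_zero hD hp)

lemma PsFront.norm_pdy (hf : PsFront D f N) (hD : IsOpen D) (hp : p ∈ D) :
    ‖pdy f p‖ = ‖pdy N p‖ := by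
  rw [(hf.2.2.2 p hp).2, norm_neg]
  exact norm_cross3_of_inner_eq_zero (hf.2.2.1.2.1 p hp) (hf.2.2.1.inner_pdy_eq_zero hD hp)

lemma PsFront.norm_pdx_eq (hf : PsFront (I ×ˢ J) f N) (hD : IsOpen (I ×ˢ J))
    (hJ : J.OrdConnected) {x y y' : ℝ} (hx : x ∈ I) (hy : y ∈ J) (hy' : y' ∈ J) :
    ‖pdx f (x, y)‖ = ‖pdx f (x, y')‖ := by
  rw [hf.norm_pdx hD ⟨hx, hy⟩, hf.norm_pdx hD ⟨hx, hy'⟩]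
  exact hf.2.2.1.norm_pdx_eq hD hJ hx hy hy'

lemma PsFront.norm_pdy_eq (hf : PsFront (I ×ˢ J) f N) (hD : IsOpen (I ×ˢ J))
    (hI : I.OrdConnected) {x x' y : ℝ} (hx : x ∈ I) (hx' : x' ∈ I) (hy : y ∈ J) :
    ‖pdy f (x, y)‖ = ‖pdy f (x', y)‖ := by
  rw [hf.norm_pdy hD ⟨hx, hy⟩, hf.norm_pdy hD ⟨hx', hy⟩]
  exact hf.2.2.1.norm_pdy_eq hD hI hx hx' hy

end PsFronts

section Reparametrization

variable {E : Type*} [NormedAddCommGroup E] [NormedSpace ℝ E] {F : ℝ × ℝ → E} {u v : ℝ → ℝ}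
  {q : ℝ × ℝ} {D : Set (ℝ × ℝ)} {I' J' : Set ℝ}

lemma C1M.pdx_comp_prodMap (hF : C1M D F) (hD : IsOpen D) (hI' : IsOpen I')
    (hu : ContDiffOn ℝ 1 u I') (hmaps : MapsTo (fun q => (u q.1, v q.2)) (I' ×ˢ J') D)
    (hq : q ∈ I' ×ˢ J') :
    pdx (fun q => F (u q.1, v q.2)) q = deriv u q.1 • pdx F (u q.1, v q.2) :=
  pdx_eq_of_hasDerivAt <| (hF.differentiableAt hD (hmaps hq)).lineDifferentiableAt.hasDerivAt_pdx
    |>.scomp q.1 (hu.differentiableOn_one.differentiableAt (hI'.mem_nhds hq.1)).hasDerivAt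

lemma C1M.pdy_comp_prodMap (hF : C1M D F) (hD : IsOpen D) (hJ' : IsOpen J')
    (hv : ContDiffOn ℝ 1 v J') (hmaps : MapsTo (fun q => (u q.1, v q.2)) (I' ×ˢ J') D)
    (hq : q ∈ I' ×ˢ J') :
    pdy (fun q => F (u q.1, v q.2)) q = deriv v q.2 • pdy F (u q.1, v q.2) :=
  pdy_eq_of_hasDerivAt <| (hF.differentiableAt hD (hmaps hq)).lineDifferentiableAt.hasDerivAt_pdy
    |>.scomp q.2 (hv.differentiableOn_one.differentiableAt (hJ'.mem_nhds hq.2)).hasDerivAt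

lemma C1M.hasDerivAt_pdx_comp_prodMap (hF : C1M D F) (hD : IsOpen D) (hI' : IsOpen I')
    (hJ' : IsOpen J') (hu : ContDiffOn ℝ 1 u I') (hv : ContDiffOn ℝ 1 v J')
    (hmaps : MapsTo (fun q => (u q.1, v q.2)) (I' ×ˢ J') D) (hq : q ∈ I' ×ˢ J') :
    HasDerivAt (fun τ => pdx (fun q => F (u q.1, v q.2)) (q.1, τ))
      ((deriv u q.1 * deriv v q.2) • pdy (pdx F) (u q.1, v q.2)) q.2 := by
  have hv' := hv.differentiableOn_one.differentiableAt (hJ'.mem_nhds hq.2)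
  have hslice := ((hF.2.1 _ (hmaps hq)).hasDerivAt_pdy.scomp q.2 hv'.hasDerivAt).const_smul
    (deriv u q.1)
  rw [smul_smul] at hslice
  refine hslice.congr_of_eventuallyEq ?_
  filter_upwards [hJ'.mem_nhds hq.2] with τ hτ
  exact hF.pdx_comp_prodMap hD hI' hu hmaps (q := (q.1, τ)) ⟨hq.1, hτ⟩

lemma C1M.hasDerivAt_pdy_comp_prodMap (hF : C1M D F) (hD : IsOpen D) (hI' : IsOpen I')
    (hJ' : IsOpen J') (hu : ContDiffOn ℝ 1 u I') (hv : ContDiffOn ℝ 1 v J')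
    (hmaps : MapsTo (fun q => (u q.1, v q.2)) (I' ×ˢ J') D) (hq : q ∈ I' ×ˢ J') :
    HasDerivAt (fun σ => pdy (fun q => F (u q.1, v q.2)) (σ, q.2))
      ((deriv u q.1 * deriv v q.2) • pdx (pdy F) (u q.1, v q.2)) q.1 := by
  have hu' := hu.differentiableOn_one.differentiableAt (hI'.mem_nhds hq.1)
  have hslice := ((hF.2.2.1 _ (hmaps hq)).hasDerivAt_pdx.scomp q.1 hu'.hasDerivAt).const_smul
    (deriv v q.2)
  rw [smul_smul, mul_comm] at hslice
  refine hslice.congr_of_eventuallyEq ?_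
  filter_upwards [hI'.mem_nhds hq.1] with σ hσ
  exact hF.pdy_comp_prodMap hD hJ' hv hmaps (q := (σ, q.2)) ⟨hσ, hq.2⟩

lemma C1M.comp_prodMap (hF : C1M D F) (hD : IsOpen D) (hI' : IsOpen I')
    (hJ' : IsOpen J') (hu : ContDiffOn ℝ 1 u I') (hv : ContDiffOn ℝ 1 v J')
    (hmaps : MapsTo (fun q => (u q.1, v q.2)) (I' ×ˢ J') D) :
    C1M (I' ×ˢ J') (fun q => F (u q.1, v q.2)) := by
  have hxy := fun q (hq : q ∈ I' ×ˢ J') => hF.hasDerivAt_pdx_comp_prodMap hD hI' hJ' hu hv hmaps hq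
  have hyx := fun q (hq : q ∈ I' ×ˢ J') => hF.hasDerivAt_pdy_comp_prodMap hD hI' hJ' hu hv hmaps hq
  have hφ : ContinuousOn (fun q : ℝ × ℝ => (u q.1, v q.2)) (I' ×ˢ J') :=
    hu.continuousOn.prodMap hv.continuousOn
  have hc : ContinuousOn (fun q : ℝ × ℝ => deriv u q.1 * deriv v q.2) (I' ×ˢ J') :=
    ((hu.continuousOn_deriv_of_isOpen hI' le_rfl).comp continuousOn_fst fun _ hq => hq.1).mul
      ((hv.continuousOn_deriv_of_isOpen hJ' le_rfl).comp continuousOn_snd fun _ hq => hq.2)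
  refine ⟨hF.1.comp (hu.prodMap hv) hmaps,
    fun q hq => (hasLineDerivAt_vertical_iff.mpr (hxy q hq)).lineDifferentiableAt,
    fun q hq => (hasLineDerivAt_horizontal_iff.mpr (hyx q hq)).lineDifferentiableAt,
    (hc.smul (hF.2.2.2.1.comp hφ hmaps)).congr fun q hq => pdy_eq_of_hasDerivAt (hxy q hq),
    (hc.smul (hF.2.2.2.2.1.comp hφ hmaps)).congr fun q hq => pdx_eq_of_hasDerivAt (hyx q hq),
    fun q hq => ?_⟩
  rw [pdy_eq_of_hasDerivAt (hxy q hq), pdx_eq_of_hasDerivAt (hyx q hq), hF.2.2.2.2.2 _ (hmaps hq)]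

variable {f N : ℝ × ℝ → E3}

lemma WeakHarmonic.comp_prodMap (hN : WeakHarmonic D N) (hD : IsOpen D) (hI' : IsOpen I')
    (hJ' : IsOpen J') (hu : ContDiffOn ℝ 1 u I') (hv : ContDiffOn ℝ 1 v J')
    (hmaps : MapsTo (fun q => (u q.1, v q.2)) (I' ×ˢ J') D)
    (hu0 : ∀ σ ∈ I', deriv u σ ≠ 0) (hv0 : ∀ τ ∈ J', deriv v τ ≠ 0) :
    WeakHarmonic (I' ×ˢ J') (fun q => N (u q.1, v q.2)) := by
  obtain ⟨hC, hunit, hreg, h, hh⟩ := hN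
  refine ⟨hC.comp_prodMap hD hI' hJ' hu hv hmaps, fun q hq => hunit _ (hmaps hq),
    fun q hq => ⟨?_, ?_⟩, fun q => (deriv u q.1 * deriv v q.2) * h (u q.1, v q.2),
    fun q hq => ⟨?_, ?_⟩⟩
  · rw [hC.pdx_comp_prodMap hD hI' hu hmaps hq]
    exact smul_ne_zero (hu0 _ hq.1) (hreg _ (hmaps hq)).1
  · rw [hC.pdy_comp_prodMap hD hJ' hv hmaps hq]
    exact smul_ne_zero (hv0 _ hq.2) (hreg _ (hmaps hq)).2
  · rw [pdy_eq_of_hasDerivAt (hC.hasDerivAt_pdx_comp_prodMap hD hI' hJ' hu hv hmaps hq),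
      (hh _ (hmaps hq)).1, smul_smul]
  · rw [pdx_eq_of_hasDerivAt (hC.hasDerivAt_pdy_comp_prodMap hD hI' hJ' hu hv hmaps hq),
      (hh _ (hmaps hq)).2, smul_smul]

lemma PsFront.comp_prodMap (hf : PsFront D f N) (hD : IsOpen D) (hI' : IsOpen I')
    (hJ' : IsOpen J') (hu : ContDiffOn ℝ 1 u I') (hv : ContDiffOn ℝ 1 v J')
    (hmaps : MapsTo (fun q => (u q.1, v q.2)) (I' ×ˢ J') D)
    (hu0 : ∀ σ ∈ I', deriv u σ ≠ 0) (hv0 : ∀ τ ∈ J', deriv v τ ≠ 0) :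
    PsFront (I' ×ˢ J') (fun q => f (u q.1, v q.2)) (fun q => N (u q.1, v q.2)) := by
  obtain ⟨hC, hreg, hN, hfront⟩ := hf
  refine ⟨hC.comp_prodMap hD hI' hJ' hu hv hmaps, fun q hq => ⟨?_, ?_⟩,
    hN.comp_prodMap hD hI' hJ' hu hv hmaps hu0 hv0, fun q hq => ⟨?_, ?_⟩⟩
  · rw [hC.pdx_comp_prodMap hD hI' hu hmaps hq]
    exact smul_ne_zero (hu0 _ hq.1) (hreg _ (hmaps hq)).1
  · rw [hC.pdy_comp_prodMap hD hJ' hv hmaps hq]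
    exact smul_ne_zero (hv0 _ hq.2) (hreg _ (hmaps hq)).2
  · rw [hC.pdx_comp_prodMap hD hI' hu hmaps hq, hN.1.pdx_comp_prodMap hD hI' hu hmaps hq,
      (hfront _ (hmaps hq)).1, cross3_smul_right]
  · rw [hC.pdy_comp_prodMap hD hJ' hv hmaps hq, hN.1.pdy_comp_prodMap hD hJ' hv hmaps hq,
      (hfront _ (hmaps hq)).2, cross3_smul_right, smul_neg]

end Reparametrization

section InverseFunctions

variable {I : Set ℝ} {s c : ℝ → ℝ}

lemma hasDerivAt_integral_of_continuousOn (hI : IsOpen I) (hIc : I.OrdConnected)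
    (hc : ContinuousOn c I) {x₀ x : ℝ} (hx₀ : x₀ ∈ I) (hx : x ∈ I) :
    HasDerivAt (fun x => ∫ u in x₀..x, c u) (c x) x :=
  intervalIntegral.integral_hasDerivAt_right (hc.mono (hIc.uIcc_subset hx₀ hx)).intervalIntegrable
    (hc.stronglyMeasurableAtFilter hI x hx) (hc.continuousAt (hI.mem_nhds hx))

lemma contDiffOn_one_of_hasDerivAt (hI : IsOpen I) (hs : ∀ x ∈ I, HasDerivAt s (c x) x)
    (hc : ContinuousOn c I) : ContDiffOn ℝ 1 s I := by
  rw [show (1 : WithTop ℕ∞) = 0 + 1 from rfl, contDiffOn_succ_iff_deriv_of_isOpen hI]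
  refine ⟨fun x hx => (hs x hx).differentiableAt.differentiableWithinAt, by simp, ?_⟩
  exact contDiffOn_zero.mpr (hc.congr fun x hx => (hs x hx).deriv)

lemma IsOpen.image_of_hasStrictDerivAt (hI : IsOpen I) (hs : ∀ x ∈ I, HasStrictDerivAt s (c x) x)
    (h0 : ∀ x ∈ I, c x ≠ 0) : IsOpen (s '' I) := by
  rw [isOpen_iff_mem_nhds]
  rintro _ ⟨x, hx, rfl⟩
  rw [← (hs x hx).map_nhds_eq (h0 x hx)]
  exact image_mem_map (hI.mem_nhds hx)

lemma hasStrictDerivAt_invFunOn (hI : IsOpen I) (hinj : InjOn s I) {x c₀ : ℝ} (hx : x ∈ I)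
    (hs : HasStrictDerivAt s c₀ x) (h0 : c₀ ≠ 0) :
    HasStrictDerivAt (invFunOn s I) c₀⁻¹ (s x) :=
  hs.to_local_left_inverse h0 <|
    eventually_of_mem (hI.mem_nhds hx) fun _ hy => hinj.leftInvOn_invFunOn hy

lemma contDiffOn_invFunOn_integral_of_pos (hI : IsOpen I) (hIc : I.OrdConnected)
    (hc : ContinuousOn c I) (hpos : ∀ x ∈ I, 0 < c x) {x₀ : ℝ} (hx₀ : x₀ ∈ I)
    (hs : ∀ x, s x = ∫ u in x₀..x, c u) :
    (∀ x ∈ I, HasDerivAt s (c x) x) ∧ ContDiffOn ℝ 1 s I ∧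
      IsOpen (s '' I) ∧ (s '' I).OrdConnected ∧ BijOn s I (s '' I) ∧
      LeftInvOn (invFunOn s I) s I ∧ MapsTo (invFunOn s I) (s '' I) I ∧
      ContDiffOn ℝ 1 (invFunOn s I) (s '' I) ∧
      ∀ σ ∈ s '' I, deriv (invFunOn s I) σ = (c (invFunOn s I σ))⁻¹ := by
  have hs' : ∀ x ∈ I, HasDerivAt s (c x) x := fun x hx =>
    funext hs ▸ hasDerivAt_integral_of_continuousOn hI hIc hc hx₀ hx
  have hC := contDiffOn_one_of_hasDerivAt hI hs' hc
  have hstrict : ∀ x ∈ I, HasStrictDerivAt s (c x) x := fun x hx =>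
    (hC.contDiffAt (hI.mem_nhds hx)).hasStrictDerivAt' (hs' x hx) one_ne_zero
  have hinj : InjOn s I := StrictMonoOn.injOn <|
    strictMonoOn_of_deriv_pos hIc.convex hC.continuousOn fun x hx => by
      rw [hI.interior_eq] at hx
      exact (hs' x hx).deriv ▸ hpos x hx
  have hopen := hI.image_of_hasStrictDerivAt hstrict fun x hx => (hpos x hx).ne'
  have hmaps : MapsTo (invFunOn s I) (s '' I) I := fun _ hσ => invFunOn_mem hσ
  have hderiv : ∀ σ ∈ s '' I, HasDerivAt (invFunOn s I) (c (invFunOn s I σ))⁻¹ σ := by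
    rintro _ ⟨x, hx, rfl⟩
    rw [hinj.leftInvOn_invFunOn hx]
    exact (hasStrictDerivAt_invFunOn hI hinj hx (hstrict x hx) (hpos x hx).ne').hasDerivAt
  have hcont : ContinuousOn (invFunOn s I) (s '' I) := fun σ hσ =>
    (hderiv σ hσ).continuousAt.continuousWithinAt
  refine ⟨hs', hC, hopen, (hIc.isPreconnected.image s hC.continuousOn).ordConnected,
    hinj.bijOn_image, fun x hx => hinj.leftInvOn_invFunOn hx, hmaps,
    contDiffOn_one_of_hasDerivAt hopen hderiv ?_, fun σ hσ => (hderiv σ hσ).deriv⟩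
  exact (hc.comp hcont hmaps).inv₀ fun σ hσ => (hpos _ (hmaps hσ)).ne'

end InverseFunctions

/-- Chebyshev reparametrization of a weakly-regular C^{1M} ps-front on a product of
open intervals: the arclength functions `s`, `t` along the coordinate curves through
`(x₀,y₀)` are C¹ with positive derivative, hence C¹ diffeomorphisms onto open intervals
`I'`, `J'`, and `g(σ,τ) = f(s⁻¹ σ, t⁻¹ τ)` is a C^{1M} ps-front (with associated map
`N ∘ (s⁻¹ × t⁻¹)`) satisfying `‖g_σ‖ ≡ 1` and `‖g_τ‖ ≡ 1`. -/
theorem stmt_4 (I J : Set ℝ) (hI : IsOpen I) (hJ : IsOpen J)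
    (hIc : I.OrdConnected) (hJc : J.OrdConnected)
    (f N : ℝ × ℝ → E3) (h : PsFront (I ×ˢ J) f N)
    (x₀ y₀ : ℝ) (hx₀ : x₀ ∈ I) (hy₀ : y₀ ∈ J)
    (s t : ℝ → ℝ)
    (hs : ∀ x, s x = ∫ u in x₀..x, ‖pdx f (u, y₀)‖)
    (ht : ∀ y, t y = ∫ u in y₀..y, ‖pdy f (x₀, u)‖) :
    (∀ x ∈ I, HasDerivAt s ‖pdx f (x, y₀)‖ x ∧ 0 < ‖pdx f (x, y₀)‖) ∧
    (∀ y ∈ J, HasDerivAt t ‖pdy f (x₀, y)‖ y ∧ 0 < ‖pdy f (x₀, y)‖) ∧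
    ContDiffOn ℝ 1 s I ∧ ContDiffOn ℝ 1 t J ∧
    ∃ (I' J' : Set ℝ) (sInv tInv : ℝ → ℝ),
      IsOpen I' ∧ IsOpen J' ∧ I'.OrdConnected ∧ J'.OrdConnected ∧
      Set.BijOn s I I' ∧ Set.BijOn t J J' ∧
      (∀ x ∈ I, sInv (s x) = x) ∧ (∀ y ∈ J, tInv (t y) = y) ∧
      ContDiffOn ℝ 1 sInv I' ∧ ContDiffOn ℝ 1 tInv J' ∧
      PsFront (I' ×ˢ J') (fun q => f (sInv q.1, tInv q.2))
        (fun q => N (sInv q.1, tInv q.2)) ∧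
      (∀ q ∈ I' ×ˢ J',
        ‖pdx (fun q => f (sInv q.1, tInv q.2)) q‖ = 1 ∧
        ‖pdy (fun q => f (sInv q.1, tInv q.2)) q‖ = 1) := by
  have hD : IsOpen (I ×ˢ J) := hI.prod hJ
  have hc : ContinuousOn (fun x => ‖pdx f (x, y₀)‖) I :=
    ((h.1.1.continuousOn_lineDeriv hD _).comp (Continuous.prodMk_left y₀).continuousOn
      fun x hx => ⟨hx, hy₀⟩).norm
  have hd : ContinuousOn (fun y => ‖pdy f (x₀, y)‖) J :=
    ((h.1.1.continuousOn_lineDeriv hD _).comp (Continuous.prodMk_right x₀).continuousOn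
      fun y hy => ⟨hx₀, hy⟩).norm
  have hcpos : ∀ x ∈ I, 0 < ‖pdx f (x, y₀)‖ := fun x hx => norm_pos_iff.2 (h.2.1 _ ⟨hx, hy₀⟩).1
  have hdpos : ∀ y ∈ J, 0 < ‖pdy f (x₀, y)‖ := fun y hy => norm_pos_iff.2 (h.2.1 _ ⟨hx₀, hy⟩).2
  obtain ⟨hs', hsC, hI', hI'c, hsbij, hsinv, hsmaps, hsInvC, hsInv'⟩ :=
    contDiffOn_invFunOn_integral_of_pos hI hIc hc hcpos hx₀ hs
  obtain ⟨ht', htC, hJ', hJ'c, htbij, htinv, htmaps, htInvC, htInv'⟩ :=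
    contDiffOn_invFunOn_integral_of_pos hJ hJc hd hdpos hy₀ ht
  have hmaps : MapsTo (fun q : ℝ × ℝ => (invFunOn s I q.1, invFunOn t J q.2))
      ((s '' I) ×ˢ (t '' J)) (I ×ˢ J) := fun q hq => ⟨hsmaps hq.1, htmaps hq.2⟩
  refine ⟨fun x hx => ⟨hs' x hx, hcpos x hx⟩, fun y hy => ⟨ht' y hy, hdpos y hy⟩, hsC, htC,
    s '' I, t '' J, invFunOn s I, invFunOn t J, hI', hJ', hI'c, hJ'c, hsbij, htbij,
    fun x hx => hsinv hx, fun y hy => htinv hy, hsInvC, htInvC,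
    h.comp_prodMap hD hI' hJ' hsInvC htInvC hmaps
      (fun σ hσ => hsInv' σ hσ ▸ inv_ne_zero (hcpos _ (hsmaps hσ)).ne')
      (fun τ hτ => htInv' τ hτ ▸ inv_ne_zero (hdpos _ (htmaps hτ)).ne'),
    fun q hq => ⟨?_, ?_⟩⟩
  · rw [h.1.pdx_comp_prodMap hD hI' hsInvC hmaps hq, norm_smul, hsInv' _ hq.1,
      h.norm_pdx_eq hD hJc (hsmaps hq.1) (htmaps hq.2) hy₀, norm_inv, norm_norm,
      inv_mul_cancel₀ (hcpos _ (hsmaps hq.1)).ne']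
  · rw [h.1.pdy_comp_prodMap hD hJ' htInvC hmaps hq, norm_smul, htInv' _ hq.2,
      h.norm_pdy_eq hD hIc (hsmaps hq.1) hx₀ (htmaps hq.2), norm_inv, norm_norm,
      inv_mul_cancel₀ (hdpos _ (htmaps hq.2)).ne']
end
end

section
/- Let f : D → ℝ³ be a weakly-regular C^{1M} Chebyshev ps-front (‖f_x‖ ≡ ‖f_y‖ ≡ 1) with weakly harmonic map N. Set F = ⟨f_x,f_y⟩ and m = −⟨f_x,N_y⟩. Then m² = 1 − F² at every point of D. Consequently, at every point p where f_x(p) and f_y(p) are linearly independent (equivalently F(p)² ≠ 1), the Gauss curvature K(p) := (ℓn − m²)/(EG − F²), with ℓ = −⟨f_x,N_x⟩ = 0, n = −⟨f_y,N_y⟩ = 0, E = G = 1, equals −1. -/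
/-!
Write `a = N`, `b = N_x`, `c = N_y`, so that `f_x = a × b` and `f_y = -(a × c)`. Since `‖N‖ ≡ 1`,
both `b` and `c` are orthogonal to the unit vector `a`, hence `‖a × b‖ = ‖b‖` and `‖a × c‖ = ‖c‖`,
and the Chebyshev condition makes `b` and `c` unit vectors. Then `ℓ = ⟨a × b, b⟩ = 0`, `n = 0`,
`F = -⟨a × b, a × c⟩ = -⟨b, c⟩` by the Binet–Cauchy identity, and `m² = ⟨a × b, c⟩²` is the Gram
determinant of `a, b, c`, which equals `1 - ⟨b, c⟩²`. Linear independence of `f_x, f_y` excludes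
`F² = 1` (equality in Cauchy–Schwarz), so `K = -m² / (1 - F²) = -1`.
-/

noncomputable section

open Real Set

open Matrix WithLp InnerProductGeometry
open scoped RealInnerProductSpace Topology

theorem inner_lineDeriv_eq_zero_of_eventually_norm_eq {E F : Type*} [NormedAddCommGroup E]
    [NormedSpace ℝ E] [NormedAddCommGroup F] [InnerProductSpace ℝ F] {f : E → F} {p : E} {r : ℝ}
    (hf : DifferentiableAt ℝ f p) (hr : ∀ᶠ q in 𝓝 p, ‖f q‖ = r) (v : E) :
    ⟪f p, lineDeriv ℝ f p v⟫ = 0 := by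
  have hconst : HasFDerivAt (‖f ·‖ ^ 2) (0 : E →L[ℝ] ℝ) p :=
    (hasFDerivAt_const (r ^ 2) p).congr_of_eventuallyEq (by filter_upwards [hr] with q hq; simp [hq])
  rw [hf.lineDeriv_eq_fderiv]
  simpa using congrArg (· v) (hf.hasFDerivAt.norm_sq.unique hconst)

theorem sq_real_inner_ne_of_linearIndependent {F : Type*} [NormedAddCommGroup F]
    [InnerProductSpace ℝ F] {x y : F} (h : LinearIndependent ℝ ![x, y]) :
    ⟪x, y⟫ ^ 2 ≠ ‖x‖ ^ 2 * ‖y‖ ^ 2 := by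
  intro hsq
  have hx : x ≠ 0 := h.ne_zero 0
  have hy : y ≠ 0 := h.ne_zero 1
  have habs : ‖⟪x, y⟫‖ = ‖x‖ * ‖y‖ := by
    rw [Real.norm_eq_abs, ← sq_eq_sq₀ (abs_nonneg _) (by positivity), sq_abs, hsq, mul_pow]
  obtain ⟨r, -, hr⟩ := (norm_inner_eq_norm_iff hx hy).1 habs
  exact (LinearIndependent.pair_iff' hx).1 h r hr.symm

lemma cross3_eq_crossProduct (a b : E3) : cross3 a b = toLp 2 (ofLp a ⨯₃ ofLp b) := by
  ext i; fin_cases i <;> simp [cross3, cross_apply]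

lemma dot_eq_dotProduct (a b : E3) : dot a b = ofLp a ⬝ᵥ ofLp b := by
  simp [dot, EuclideanSpace.inner_eq_star_dotProduct, dotProduct_comm]

lemma dot_neg_left (a b : E3) : dot (-a) b = -dot a b := inner_neg_left a b

lemma dot_neg_right (a b : E3) : dot a (-b) = -dot a b := inner_neg_right a b

lemma dot_cross3_self_right (a b : E3) : dot (cross3 a b) b = 0 := by
  rw [dot_eq_dotProduct, cross3_eq_crossProduct, dotProduct_comm]
  exact dot_cross_self _ _

lemma dot_cross3_cross3 (a b c d : E3) :
    dot (cross3 a b) (cross3 c d) = dot a c * dot b d - dot a d * dot b c := by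
  simp only [dot_eq_dotProduct, cross3_eq_crossProduct, cross_dot_cross]

lemma norm_cross3_of_dot_eq_zero {a b : E3} (h : dot a b = 0) : ‖cross3 a b‖ = ‖a‖ * ‖b‖ := by
  rw [cross3_eq_crossProduct, norm_ofLp_crossProduct,
    (inner_eq_zero_iff_angle_eq_pi_div_two a b).1 h, sin_pi_div_two, mul_one]

lemma sq_dot_cross3_eq_det_gram (a b c : E3) :
    dot (cross3 a b) c ^ 2 = (gram ℝ ![a, b, c]).det := by
  simp only [det_fin_three, gram_apply, cons_val_zero, cons_val_one, cons_val,
    EuclideanSpace.inner_eq_star_dotProduct, star_trivial, dot_eq_dotProduct, cross3_eq_crossProduct,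
    cross_apply, dotProduct, Fin.sum_univ_three]
  ring

lemma sq_dot_cross3_eq_one_sub_sq {a b c : E3} (ha : ‖a‖ = 1) (hab : dot a b = 0)
    (hac : dot a c = 0) (hb : ‖cross3 a b‖ = 1) (hc : ‖cross3 a c‖ = 1) :
    dot (cross3 a b) c ^ 2 = 1 - dot (cross3 a b) (cross3 a c) ^ 2 := by
  rw [norm_cross3_of_dot_eq_zero hab, ha, one_mul] at hb
  rw [norm_cross3_of_dot_eq_zero hac, ha, one_mul] at hc
  rw [sq_dot_cross3_eq_det_gram, dot_cross3_cross3]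
  simp only [dot] at hab hac ⊢
  simp [det_fin_three, ha, hb, hc, hab, hac, real_inner_comm a, real_inner_comm b c, sq]

/-- For a weakly-regular C^{1M} Chebyshev ps-front, with `F = ⟨f_x,f_y⟩` and
`m = −⟨f_x,N_y⟩`, one has `m² = 1 − F²`; hence at every point where `f_x`, `f_y` are
linearly independent, the Gauss curvature
`K = (ℓn − m²)/(EG − F²)` (with `ℓ = −⟨f_x,N_x⟩ = 0`, `n = −⟨f_y,N_y⟩ = 0`,
`E = G = 1`) equals `−1`. -/
theorem stmt_7 (D : Set (ℝ × ℝ)) (hD : IsOpen D)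
    (f N : ℝ × ℝ → E3) (h : PsFront D f N)
    (hE : ∀ p ∈ D, ‖pdx f p‖ = 1) (hG : ∀ p ∈ D, ‖pdy f p‖ = 1) :
    ∀ p ∈ D,
      (-dot (pdx f p) (pdy N p)) ^ 2 = 1 - dot (pdx f p) (pdy f p) ^ 2 ∧
      (LinearIndependent ℝ ![pdx f p, pdy f p] →
        dot (pdx f p) (pdy f p) ^ 2 ≠ 1 ∧
        dot (pdx f p) (pdx N p) = 0 ∧
        dot (pdy f p) (pdy N p) = 0 ∧
        ((-dot (pdx f p) (pdx N p)) * (-dot (pdy f p) (pdy N p)) -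
            (-dot (pdx f p) (pdy N p)) ^ 2) /
          (1 * 1 - dot (pdx f p) (pdy f p) ^ 2) = -1) := by
  intro p hp
  obtain ⟨-, -, ⟨hN, hNunit, -, -⟩, hfN⟩ := h
  obtain ⟨hfx, hfy⟩ := hfN p hp
  have hNdiff : DifferentiableAt ℝ N p :=
    (hN.1.contDiffAt (hD.mem_nhds hp)).differentiableAt one_ne_zero
  have hNunit_nhds : ∀ᶠ q in 𝓝 p, ‖N q‖ = 1 := (hD.eventually_mem hp).mono hNunit
  have hNx : dot (N p) (pdx N p) = 0 :=
    inner_lineDeriv_eq_zero_of_eventually_norm_eq hNdiff hNunit_nhds _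
  have hNy : dot (N p) (pdy N p) = 0 :=
    inner_lineDeriv_eq_zero_of_eventually_norm_eq hNdiff hNunit_nhds _
  have hl : dot (pdx f p) (pdx N p) = 0 := hfx ▸ dot_cross3_self_right _ _
  have hn : dot (pdy f p) (pdy N p) = 0 := by rw [hfy, dot_neg_left, dot_cross3_self_right, neg_zero]
  have hm : (-dot (pdx f p) (pdy N p)) ^ 2 = 1 - dot (pdx f p) (pdy f p) ^ 2 := by
    have hGp := hG p hp
    rw [hfy, norm_neg] at hGp
    rw [hfy, dot_neg_right, neg_sq, neg_sq, hfx]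
    exact sq_dot_cross3_eq_one_sub_sq (hNunit p hp) hNx hNy (hfx ▸ hE p hp) hGp
  refine ⟨hm, fun hli => ?_⟩
  have hF : dot (pdx f p) (pdy f p) ^ 2 ≠ 1 := by
    simpa [dot, hE p hp, hG p hp] using sq_real_inner_ne_of_linearIndependent hli
  refine ⟨hF, hl, hn, ?_⟩
  rw [hl, hn, hm, div_eq_iff (by rwa [one_mul, sub_ne_zero, ne_comm])]
  ring

end
end
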